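/- Let d_1, d_2, p_1, p_2 be integers with d_1, d_2 > 1 and 1 ≤ p_1, p_2 ≤ min(d_1, d_2). Then E_DS[p_1, d_1] / E_DS[p_2, d_1] = E_DS[p_1, d_2] / E_DS[p_2, d_2]; that is, the ratio of expected decreases for two subspace dimensions is independent of the ambient dimension. -/

import Mathlib

open MeasureTheory Real

noncomputable def sphereUniform (d : ℕ) :
    Measure (Metric.sphere (0 : EuclideanSpace ℝ (Fin d)) 1) :=
  ((volume : Measure (EuclideanSpace ℝ (Fin d))).toSphere Set.univ)⁻¹ •
    (volume : Measure (EuclideanSpace ℝ (Fin d))).toSphere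

/-- `E_DS[p,d] = ∫_{S^{d-1}} max_{1 ≤ i ≤ p} |x_i| dσ_d(x)`. -/
noncomputable def E_DS (p d : ℕ) : ℝ :=
  ∫ x : Metric.sphere (0 : EuclideanSpace ℝ (Fin d)) 1,
    (⨆ (i : Fin d) (_ : (i : ℕ) < p), |(x : EuclideanSpace ℝ (Fin d)) i|)
    ∂(sphereUniform d)

namespace EDSAux

open Set Metric Measure

/-- The one-dimensional Gaussian factor. -/
noncomputable def gaussF (t : ℝ) : ℝ := Real.exp (-(1/2) * t ^ 2)

lemma gaussF_pos (t : ℝ) : 0 < gaussF t := Real.exp_pos _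

/-- The one-dimensional Gaussian integral. -/
noncomputable def gaussG : ℝ := ∫ t : ℝ, gaussF t

lemma gaussG_pos : 0 < gaussG := by
  have : gaussG = Real.sqrt (π / (1/2)) := integral_gaussian (1/2)
  rw [this]
  have : (0:ℝ) < π / (1/2) := by positivity
  exact Real.sqrt_pos.2 this

/-- The `p`-dimensional constant. -/
noncomputable def Cp (p : ℕ) : ℝ :=
  ∫ x : Fin p → ℝ, (⨆ i, |x i|) * ∏ i, gaussF (x i)

/-- The radial integral. -/
noncomputable def Rrad (d : ℕ) : ℝ := ∫ r in Ioi (0:ℝ), r ^ d * gaussF r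

lemma Rrad_pos (d : ℕ) : 0 < Rrad d := by
  have hint : IntegrableOn (fun r : ℝ => r ^ d * gaussF r) (Ioi 0) := by
    have h := integrableOn_rpow_mul_exp_neg_mul_sq (b := 1/2) (by norm_num)
      (s := (d : ℝ)) (by exact_mod_cast neg_one_lt_zero.trans_le (Nat.cast_nonneg d))
    refine h.congr_fun (fun x hx => ?_) measurableSet_Ioi
    beta_reduce
    rw [Real.rpow_natCast]
    rfl
  rw [Rrad, setIntegral_pos_iff_support_of_nonneg_ae ?_ hint]
  · have hsub : Ioi (0:ℝ) ⊆ (Function.support fun r : ℝ => r ^ d * gaussF r) ∩ Ioi 0 := by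
      intro r hr
      refine ⟨?_, hr⟩
      have hr' : (0:ℝ) < r := hr
      have hg := gaussF_pos r
      have : 0 < r ^ d * gaussF r := by positivity
      exact fun h => this.ne' h
    calc (0:ENNReal) < volume (Ioi (0:ℝ)) := by simp [Real.volume_Ioi]
      _ ≤ _ := measure_mono hsub
  · filter_upwards [ae_restrict_mem measurableSet_Ioi] with r hr
    have hr' : (0:ℝ) < r := hr
    have hg := gaussF_pos r
    positivity

variable {p d : ℕ}

/-- The max function. -/
noncomputable def Mfun (p d : ℕ) (x : Fin d → ℝ) : ℝ :=
  ⨆ (i : Fin d) (_ : (i : ℕ) < p), |x i|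

lemma ciSup_equiv {α β : Type*} (e : α ≃ β) (f : β → ℝ) :
    ⨆ a, f (e a) = ⨆ b, f b := by
  simp only [iSup]
  congr 1
  exact e.surjective.range_comp f

lemma real_iSup_prop_neg {P : Prop} (h : ¬ P) (f : P → ℝ) : (⨆ h : P, f h) = 0 := by
  haveI : IsEmpty P := ⟨h⟩
  exact Real.iSup_of_isEmpty f

lemma Mfun_eq (hp : 1 ≤ p) (hpd : p ≤ d) (x : Fin d → ℝ) :
    Mfun p d x = ⨆ j : {i : Fin d // (i : ℕ) < p}, |x j.1| := by
  have hd : 0 < d := lt_of_lt_of_le hp hpd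
  haveI : Nonempty (Fin d) := ⟨⟨0, hd⟩⟩
  haveI : Nonempty {i : Fin d // (i : ℕ) < p} := ⟨⟨⟨0, hd⟩, hp⟩⟩
  have hbdd : BddAbove (Set.range fun j : {i : Fin d // (i : ℕ) < p} => |x j.1|) :=
    Set.Finite.bddAbove (Set.finite_range _)
  have hnn : 0 ≤ ⨆ j : {i : Fin d // (i : ℕ) < p}, |x j.1| :=
    le_trans (abs_nonneg _) (le_ciSup hbdd (Classical.arbitrary _))
  simp only [Mfun]
  apply le_antisymm
  · refine ciSup_le fun i => ?_
    rcases Classical.em ((i : ℕ) < p) with h | h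
    · calc (⨆ _ : (i : ℕ) < p, |x i|) = |x i| :=
            ciSup_pos (f := fun _ => |x i|) h
        _ ≤ _ := le_ciSup hbdd ⟨i, h⟩
    · calc (⨆ _ : (i : ℕ) < p, |x i|) = 0 := real_iSup_prop_neg h _
        _ ≤ _ := hnn
  · refine ciSup_le fun j => ?_
    calc |x j.1| = ⨆ _ : ((j.1 : Fin d) : ℕ) < p, |x j.1| :=
          (ciSup_pos (f := fun _ => |x j.1|) j.2).symm
      _ ≤ ⨆ (i : Fin d) (_ : (i : ℕ) < p), |x i| :=
          le_ciSup (f := fun i : Fin d => ⨆ _ : (i : ℕ) < p, |x i|)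
            (Set.Finite.bddAbove (Set.finite_range _)) j.1

lemma Mfun_smul (hp : 1 ≤ p) (hpd : p ≤ d) {c : ℝ} (hc : 0 ≤ c) (x : Fin d → ℝ) :
    Mfun p d (c • x) = c * Mfun p d x := by
  rw [Mfun_eq hp hpd, Mfun_eq hp hpd, Real.mul_iSup_of_nonneg hc]
  congr 1
  funext j
  simp [abs_mul, abs_of_nonneg hc]

lemma integral_volumeIoiPow (n : ℕ) (h : ℝ → ℝ) :
    ∫ r : Ioi (0:ℝ), h r.1 ∂(Measure.volumeIoiPow n) = ∫ r in Ioi (0:ℝ), r ^ n • h r := by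
  simp only [Measure.volumeIoiPow, ENNReal.ofReal]
  rw [integral_withDensity_eq_integral_smul
      ((measurable_subtype_coe.pow_const _).real_toNNReal),
    integral_subtype_comap measurableSet_Ioi fun a : ℝ => Real.toNNReal (a ^ n) • h a,
    setIntegral_congr_fun measurableSet_Ioi fun x hx => ?_]
  rw [NNReal.smul_def, Real.coe_toNNReal _ (pow_nonneg hx.out.le _)]

end EDSAux

open EDSAux Set Metric

lemma polar_side (p d : ℕ) (hp : 1 ≤ p) (hpd : p ≤ d) (hd : 1 < d) :
    ∫ x : EuclideanSpace ℝ (Fin d), Mfun p d x * gaussF ‖x‖ =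
      (∫ θ : Metric.sphere (0 : EuclideanSpace ℝ (Fin d)) 1, Mfun p d θ.1
        ∂((volume : Measure (EuclideanSpace ℝ (Fin d))).toSphere)) * Rrad d := by
  set E := EuclideanSpace ℝ (Fin d)
  haveI : Nonempty (Fin d) := ⟨⟨0, by omega⟩⟩
  haveI : Nontrivial E := by infer_instance
  have hdim : Module.finrank ℝ E = d := finrank_euclideanSpace_fin
  have hd1 : 1 ≤ d := hd.le
  calc ∫ x : E, Mfun p d x * gaussF ‖x‖
      = ∫ x : ({0}ᶜ : Set E), Mfun p d x.1 * gaussF ‖x.1‖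
          ∂((volume : Measure E).comap (↑)) := by
        rw [integral_subtype_comap (measurableSet_singleton (0:E)).compl
          (fun x : E => Mfun p d x * gaussF ‖x‖), MeasureTheory.restrict_compl_singleton]
    _ = ∫ z : Metric.sphere (0:E) 1 × Ioi (0:ℝ),
          Mfun p d (z.1 : E) * (z.2.1 * gaussF z.2.1)
          ∂((volume : Measure E).toSphere.prod
            (Measure.volumeIoiPow (Module.finrank ℝ E - 1))) := by
        rw [← MeasurePreserving.integral_comp
          ((volume : Measure E).measurePreserving_homeomorphUnitSphereProd)
          (Homeomorph.measurableEmbedding _)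
          (fun z : Metric.sphere (0:E) 1 × Ioi (0:ℝ) =>
            Mfun p d (z.1 : E) * (z.2.1 * gaussF z.2.1))]
        refine integral_congr_ae (Filter.Eventually.of_forall fun x => ?_)
        have hx : x.1 ≠ 0 := x.2
        have hnorm : ‖x.1‖ ≠ 0 := norm_ne_zero_iff.2 hx
        simp only [Function.comp, homeomorphUnitSphereProd_apply_fst_coe,
          homeomorphUnitSphereProd_apply_snd_coe]
        have hM : Mfun p d ((‖x.1‖⁻¹ : ℝ) • x.1) = ‖x.1‖⁻¹ * Mfun p d x.1 :=
          Mfun_smul hp hpd (by positivity) _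
        rw [WithLp.ofLp_smul, hM]
        field_simp
    _ = (∫ θ : Metric.sphere (0:E) 1, Mfun p d θ.1 ∂((volume : Measure E).toSphere)) *
          ∫ r : Ioi (0:ℝ), r.1 * gaussF r.1
            ∂(Measure.volumeIoiPow (Module.finrank ℝ E - 1)) :=
        integral_prod_mul (fun θ : Metric.sphere (0:E) 1 => Mfun p d θ.1)
          (fun r : Ioi (0:ℝ) => r.1 * gaussF r.1)
    _ = _ := by
        rw [integral_volumeIoiPow (Module.finrank ℝ E - 1) (fun r => r * gaussF r)]
        congr 1
        rw [Rrad]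
        refine setIntegral_congr_fun measurableSet_Ioi fun r _ => ?_
        rw [smul_eq_mul, ← mul_assoc, ← pow_succ, hdim, Nat.sub_add_cancel hd1]

/-- Reindexing equivalence. -/
def esub (p d : ℕ) (hpd : p ≤ d) : {i : Fin d // (i : ℕ) < p} ≃ Fin p where
  toFun j := ⟨j.1, j.2⟩
  invFun i := ⟨⟨i.1, lt_of_lt_of_le i.2 hpd⟩, i.2⟩
  left_inv j := by ext; rfl
  right_inv i := by ext; rfl

lemma fubini_side (p d : ℕ) (hp : 1 ≤ p) (hpd : p ≤ d) :
    ∫ x : EuclideanSpace ℝ (Fin d), Mfun p d x * gaussF ‖x‖ =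
      Cp p * gaussG ^ (d - p) := by
  classical
  have h1 : ∫ x : EuclideanSpace ℝ (Fin d), Mfun p d x * gaussF ‖x‖ =
      ∫ x : Fin d → ℝ, Mfun p d x * ∏ i, gaussF (x i) := by
    rw [← (EuclideanSpace.volume_preserving_symm_measurableEquiv_toLp (Fin d)).integral_comp'
      (fun x : Fin d → ℝ => Mfun p d x * ∏ i, gaussF (x i))]
    refine integral_congr_ae (Filter.Eventually.of_forall fun x => ?_)
    show Mfun p d x * gaussF ‖x‖ =
      Mfun p d ((MeasurableEquiv.toLp 2 (Fin d → ℝ)).symm x) *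
        ∏ i, gaussF (((MeasurableEquiv.toLp 2 (Fin d → ℝ)).symm x) i)
    have hx : ((MeasurableEquiv.toLp 2 (Fin d → ℝ)).symm x : Fin d → ℝ) = x := rfl
    rw [hx]
    congr 1
    have hnorm : ‖x‖ ^ 2 = ∑ i, (x i) ^ 2 := by
      rw [EuclideanSpace.norm_eq, Real.sq_sqrt (by positivity)]
      refine Finset.sum_congr rfl fun i _ => ?_
      rw [Real.norm_eq_abs, sq_abs]
    rw [gaussF, hnorm, Finset.mul_sum, Real.exp_sum]
    rfl
  have h2 : ∫ x : Fin d → ℝ, Mfun p d x * ∏ i, gaussF (x i) =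
      ∫ z : ({i : Fin d // (i : ℕ) < p} → ℝ) × ({i : Fin d // ¬ (i : ℕ) < p} → ℝ),
        ((⨆ j, |z.1 j|) * ∏ j, gaussF (z.1 j)) * ∏ j, gaussF (z.2 j) := by
    rw [← (volume_preserving_piEquivPiSubtypeProd (fun _ : Fin d => ℝ)
      (fun i : Fin d => (i : ℕ) < p)).integral_comp'
      (fun z : ({i : Fin d // (i : ℕ) < p} → ℝ) × ({i : Fin d // ¬ (i : ℕ) < p} → ℝ) =>
        ((⨆ j, |z.1 j|) * ∏ j, gaussF (z.1 j)) * ∏ j, gaussF (z.2 j))]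
    refine integral_congr_ae (Filter.Eventually.of_forall fun x => ?_)
    have hfst : ∀ j : {i : Fin d // (i : ℕ) < p},
        ((MeasurableEquiv.piEquivPiSubtypeProd (fun _ : Fin d => ℝ)
          (fun i : Fin d => (i : ℕ) < p)) x).1 j = x j.1 := fun j => rfl
    have hsnd : ∀ j : {i : Fin d // ¬ (i : ℕ) < p},
        ((MeasurableEquiv.piEquivPiSubtypeProd (fun _ : Fin d => ℝ)
          (fun i : Fin d => (i : ℕ) < p)) x).2 j = x j.1 := fun j => rfl
    simp only [hfst, hsnd]
    rw [mul_assoc, Fintype.prod_subtype_mul_prod_subtype (fun i : Fin d => (i : ℕ) < p)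
      (fun i => gaussF (x i)), ← Mfun_eq hp hpd]
  have h3 : ∫ z : ({i : Fin d // (i : ℕ) < p} → ℝ) × ({i : Fin d // ¬ (i : ℕ) < p} → ℝ),
        ((⨆ j, |z.1 j|) * ∏ j, gaussF (z.1 j)) * ∏ j, gaussF (z.2 j) =
      (∫ a : {i : Fin d // (i : ℕ) < p} → ℝ, (⨆ j, |a j|) * ∏ j, gaussF (a j)) *
        ∫ b : {i : Fin d // ¬ (i : ℕ) < p} → ℝ, ∏ j, gaussF (b j) := by
    rw [Measure.volume_eq_prod]
    exact integral_prod_mul (fun a : {i : Fin d // (i : ℕ) < p} → ℝ =>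
        (⨆ j, |a j|) * ∏ j, gaussF (a j))
      (fun b : {i : Fin d // ¬ (i : ℕ) < p} → ℝ => ∏ j, gaussF (b j))
  have h4 : (∫ b : {i : Fin d // ¬ (i : ℕ) < p} → ℝ, ∏ j, gaussF (b j)) =
      gaussG ^ (d - p) := by
    rw [volume_pi, integral_fintype_prod_eq_pow gaussF, ← gaussG]
    congr 1
    rw [Fintype.card_subtype_compl, Fintype.card_congr (esub p d hpd), Fintype.card_fin,
      Fintype.card_fin]
  have h5 : (∫ a : {i : Fin d // (i : ℕ) < p} → ℝ, (⨆ j, |a j|) * ∏ j, gaussF (a j)) =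
      Cp p := by
    rw [← (volume_measurePreserving_piCongrLeft (fun _ : {i : Fin d // (i : ℕ) < p} => ℝ)
      (esub p d hpd).symm).integral_comp'
      (fun a : {i : Fin d // (i : ℕ) < p} → ℝ => (⨆ j, |a j|) * ∏ j, gaussF (a j))]
    rw [Cp]
    refine integral_congr_ae (Filter.Eventually.of_forall fun x => ?_)
    have he3 : ∀ j : {i : Fin d // (i : ℕ) < p},
        (MeasurableEquiv.piCongrLeft (fun _ : {i : Fin d // (i : ℕ) < p} => ℝ)
          (esub p d hpd).symm) x j = x ((esub p d hpd) j) := by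
      intro j
      have h := Equiv.piCongrLeft_apply_apply (fun _ : {i : Fin d // (i : ℕ) < p} => ℝ)
        (esub p d hpd).symm x ((esub p d hpd) j)
      rw [Equiv.symm_apply_apply] at h
      rw [MeasurableEquiv.coe_piCongrLeft]
      exact h
    simp only [he3]
    congr 1
    · exact ciSup_equiv (esub p d hpd) (fun i => |x i|)
    · exact Equiv.prod_comp (esub p d hpd) (fun i => gaussF (x i))
  rw [h1, h2, h3, h4, h5]

/-- Key identity: `E_DS p d` factors into a `d`-part times a `p`-part. -/
lemma E_DS_eq_key (p d : ℕ) (hp : 1 ≤ p) (hpd : p ≤ d) (hd : 1 < d) :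
    E_DS p d =
      ((((volume : Measure (EuclideanSpace ℝ (Fin d))).toSphere Set.univ)⁻¹.toReal
        * gaussG ^ d / Rrad d)) * (Cp p / gaussG ^ p) := by
  have h0 : E_DS p d =
      (((volume : Measure (EuclideanSpace ℝ (Fin d))).toSphere Set.univ)⁻¹).toReal *
        ∫ θ : Metric.sphere (0 : EuclideanSpace ℝ (Fin d)) 1, Mfun p d θ.1
          ∂((volume : Measure (EuclideanSpace ℝ (Fin d))).toSphere) := by
    rw [E_DS, sphereUniform, integral_smul_measure, smul_eq_mul]
    rfl
  have hR := (Rrad_pos d).ne'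
  have hS : (∫ θ : Metric.sphere (0 : EuclideanSpace ℝ (Fin d)) 1, Mfun p d θ.1
      ∂((volume : Measure (EuclideanSpace ℝ (Fin d))).toSphere)) =
      Cp p * gaussG ^ (d - p) / Rrad d := by
    rw [eq_div_iff hR, ← polar_side p d hp hpd hd, fubini_side p d hp hpd]
  rw [h0, hS, pow_sub₀ _ gaussG_pos.ne' hpd]
  field_simp

theorem E_DS_ratio_subspace (d₁ d₂ p₁ p₂ : ℕ)
    (hd₁ : 1 < d₁) (hd₂ : 1 < d₂)
    (hp₁ : 1 ≤ p₁) (hp₂ : 1 ≤ p₂)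
    (hp₁d : p₁ ≤ min d₁ d₂) (hp₂d : p₂ ≤ min d₁ d₂) :
    E_DS p₁ d₁ / E_DS p₂ d₁ = E_DS p₁ d₂ / E_DS p₂ d₂ := by
  have K_ne : ∀ d : ℕ, 1 < d →
      (((volume : Measure (EuclideanSpace ℝ (Fin d))).toSphere Set.univ)⁻¹.toReal
        * gaussG ^ d / Rrad d) ≠ 0 := by
    intro d hd
    haveI : Nonempty (Fin d) := ⟨⟨0, by omega⟩⟩
    have hT0 : (volume : Measure (EuclideanSpace ℝ (Fin d))).toSphere Set.univ ≠ 0 := by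
      rw [Measure.toSphere_apply_univ]
      refine mul_ne_zero ?_ ?_
      · simp [finrank_euclideanSpace_fin]; omega
      · exact (measure_ball_pos _ _ one_pos).ne'
    have hTtop : (volume : Measure (EuclideanSpace ℝ (Fin d))).toSphere Set.univ ≠ ⊤ :=
      measure_ne_top _ _
    have h1 : (((volume : Measure (EuclideanSpace ℝ (Fin d))).toSphere Set.univ)⁻¹).toReal ≠ 0 := by
      rw [ENNReal.toReal_ne_zero]
      exact ⟨ENNReal.inv_ne_zero.2 hTtop, ENNReal.inv_ne_top.2 hT0⟩
    have := gaussG_pos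
    have := Rrad_pos d
    positivity
  rw [E_DS_eq_key p₁ d₁ hp₁ (hp₁d.trans (min_le_left _ _)) hd₁,
    E_DS_eq_key p₂ d₁ hp₂ (hp₂d.trans (min_le_left _ _)) hd₁,
    E_DS_eq_key p₁ d₂ hp₁ (hp₁d.trans (min_le_right _ _)) hd₂,
    E_DS_eq_key p₂ d₂ hp₂ (hp₂d.trans (min_le_right _ _)) hd₂,
    mul_div_mul_left _ _ (K_ne d₁ hd₁), mul_div_mul_left _ _ (K_ne d₂ hd₂)]
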